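/- Let n ≥ 2 and let m be an integer with 0 ≤ m ≤ n. Define the n×n matrices ℒ(q) by ℒ^i_j(q) = −q^i δ^1_j + δ^{i+1}_j, and Λ(r) as follows: if m < n, Λ^i_j(r) = δ^{i+1}_j (1 − δ^i_{n−m}) − ½ r^i δ^1_j − ½ r^{n−j−m+1+n⌊(j+m−1)/n⌋} δ^i_{n−m}; if m = n, Λ^i_j(r) = δ^{i+1}_j + ¼ r^i r^{n−j+1}. Then for every r ∈ ℝⁿ one has the matrix identity ℒ(φ(r)) · Dφ(r) = Dφ(r) · Λ(r), where Dφ(r) is the Jacobian matrix (∂φ^i/∂r^j)(r); that is, the special conformal Killing tensor L takes the form Λ in the coordinates r. -/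

import Mathlib

open Finset

noncomputable section

/-- Component of `v : Fin n → ℝ` with label `t ∈ {1,…,n}` (and `0` otherwise). -/
def get (n : ℕ) (v : Fin n → ℝ) (t : ℕ) : ℝ :=
  if h : 1 ≤ t ∧ t ≤ n then v ⟨t - 1, by omega⟩ else 0

/-- Component with an integer label. -/
def getZ (n : ℕ) (v : Fin n → ℝ) (t : ℤ) : ℝ :=
  if h : 1 ≤ t ∧ t ≤ (n : ℤ) then v ⟨t.toNat - 1, by omega⟩ else 0

/-- The unit vector in `Fin n → ℝ` with label `i ∈ {1,…,n}`. -/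
def evec (n i : ℕ) : Fin n → ℝ := fun t => if (t : ℕ) + 1 = i then 1 else 0

/-- The map `φ : ℝⁿ → ℝⁿ`, `r ↦ q`, given by
`q^i = r^i + ¼ Σ_{j=1}^{i-1} r^j r^{i-j}` for `i = 1,…,n-m` and
`q^i = −¼ Σ_{j=i}^{n} r^j r^{n-j+i}` for `i = n-m+1,…,n`. -/
def phi (n m : ℕ) (r : Fin n → ℝ) : Fin n → ℝ := fun i =>
  if (i : ℕ) + 1 ≤ n - m then
    r i + (1/4) * ∑ j ∈ Finset.Icc 1 ((i : ℕ) + 1 - 1), get n r j * get n r ((i : ℕ) + 1 - j)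
  else
    -(1/4) * ∑ j ∈ Finset.Icc ((i : ℕ) + 1) n, get n r j * get n r (n - j + ((i : ℕ) + 1))

/-- The special conformal Killing tensor in the `q`-coordinates:
`ℒ^i_j(q) = −q^i δ^1_j + δ^{i+1}_j`. -/
def Lq (q : ℕ → ℝ) (i j : ℕ) : ℝ :=
  -q i * (if j = 1 then 1 else 0) + (if j = i + 1 then 1 else 0)

/-- The special conformal Killing tensor in the `r`-coordinates: for `m < n`,
`Λ^i_j = δ^{i+1}_j (1 − δ^i_{n−m}) − ½ r^i δ^1_j − ½ r^{n−j−m+1+n⌊(j+m−1)/n⌋} δ^i_{n−m}`;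
for `m = n`, `Λ^i_j = δ^{i+1}_j + ¼ r^i r^{n−j+1}`. -/
def LamMat (n m : ℕ) (r : Fin n → ℝ) (i j : ℕ) : ℝ :=
  if m < n then
    (if j = i + 1 then 1 else 0) * (1 - (if i = n - m then 1 else 0)) -
      (1/2) * get n r i * (if j = 1 then 1 else 0) -
      (1/2) * getZ n r ((n : ℤ) - j - m + 1 + n * (((j : ℤ) + m - 1) / n)) *
        (if i = n - m then 1 else 0)
  else
    (if j = i + 1 then 1 else 0) + (1/4) * get n r i * get n r (n - j + 1)

-- section 1: basics
lemma get_zero_of_big {n : ℕ} (v : Fin n → ℝ) {t : ℕ} (h : n < t) : get n v t = 0 := by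
  rw [_root_.get, dif_neg]; omega

lemma get_zero_of_zero {n : ℕ} (v : Fin n → ℝ) : get n v 0 = 0 := by
  rw [_root_.get, dif_neg]; omega

lemma diffAt_get {n : ℕ} (t : ℕ) (r : Fin n → ℝ) :
    DifferentiableAt ℝ (fun v : Fin n → ℝ => get n v t) r := by
  unfold _root_.get
  by_cases h : 1 ≤ t ∧ t ≤ n
  · simp only [dif_pos h]
    exact (differentiable_pi.mp differentiable_id _) r
  · simp only [dif_neg h]; exact differentiableAt_const 0

lemma fderiv_get {n : ℕ} (t : ℕ) (r w : Fin n → ℝ) :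
    fderiv ℝ (fun v : Fin n → ℝ => get n v t) r w = get n w t := by
  unfold _root_.get
  by_cases h : 1 ≤ t ∧ t ≤ n
  · simp only [dif_pos h]
    have : (fun v : Fin n → ℝ => v ⟨t - 1, by omega⟩)
        = (ContinuousLinearMap.proj (R := ℝ) (φ := fun _ : Fin n => ℝ) ⟨t - 1, by omega⟩) := rfl
    rw [this, ContinuousLinearMap.fderiv]
    rfl
  · simp only [dif_neg h, fderiv_fun_const]
    rfl

lemma get_evec {n : ℕ} {j : ℕ} (hj : 1 ≤ j) (hj' : j ≤ n) (t : ℕ) :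
    get n (evec n j) t = if t = j then 1 else 0 := by
  by_cases h : 1 ≤ t ∧ t ≤ n
  · rw [_root_.get, dif_pos h, evec]
    simp only []
    have : t - 1 + 1 = t := by omega
    rw [this]
  · rw [_root_.get, dif_neg h, if_neg]; omega
-- section 2: function form of components of phi, Dphi, derivative
lemma get_phi_low {n m : ℕ} (v : Fin n → ℝ) {s : ℕ} (hs : 1 ≤ s) (hsn : s ≤ n)
    (h : s ≤ n - m) :
    get n (phi n m v) s
      = get n v s + (1/4) * ∑ t ∈ Finset.Icc 1 (s - 1), get n v t * get n v (s - t) := by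
  have h1 : 1 ≤ s ∧ s ≤ n := ⟨hs, hsn⟩
  rw [_root_.get, dif_pos h1, _root_.get, dif_pos h1, phi]
  have hv : (⟨s - 1, by omega⟩ : Fin n).val + 1 = s := by simp; omega
  rw [if_pos (by rw [hv]; exact h), hv]

lemma get_phi_high {n m : ℕ} (v : Fin n → ℝ) {s : ℕ} (hs : 1 ≤ s) (hsn : s ≤ n)
    (h : ¬ (s ≤ n - m)) :
    get n (phi n m v) s
      = -(1/4) * ∑ t ∈ Finset.Icc s n, get n v t * get n v (n - t + s) := by
  have h1 : 1 ≤ s ∧ s ≤ n := ⟨hs, hsn⟩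
  rw [_root_.get, dif_pos h1, phi]
  have hv : (⟨s - 1, by omega⟩ : Fin n).val + 1 = s := by simp; omega
  rw [if_neg (by rw [hv]; exact h), hv]

/-- Jacobian entry `∂φ^s/∂r^j`. -/
def Dphi (n m : ℕ) (r : Fin n → ℝ) (s j : ℕ) : ℝ :=
  if s ≤ n - m then (if j = s then 1 else 0) + (1/2) * get n r (s - j)
  else -(1/2) * get n r (n - j + s)

lemma diffAt_quad {n : ℕ} (r : Fin n → ℝ) (F : Finset ℕ) (a b : ℕ → ℕ) :
    DifferentiableAt ℝ (fun v : Fin n → ℝ => ∑ t ∈ F, get n v (a t) * get n v (b t)) r :=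
  DifferentiableAt.fun_sum fun t _ => (diffAt_get (a t) r).mul (diffAt_get (b t) r)

lemma fderiv_quad {n : ℕ} (r w : Fin n → ℝ) (F : Finset ℕ) (a b : ℕ → ℕ) :
    fderiv ℝ (fun v : Fin n → ℝ => ∑ t ∈ F, get n v (a t) * get n v (b t)) r w
      = ∑ t ∈ F, (get n w (a t) * get n r (b t) + get n r (a t) * get n w (b t)) := by
  rw [fderiv_fun_sum (fun t _ => (diffAt_get (a t) r).fun_mul (diffAt_get (b t) r))]
  rw [ContinuousLinearMap.sum_apply]
  refine Finset.sum_congr rfl fun t _ => ?_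
  rw [fderiv_fun_mul (diffAt_get (a t) r) (diffAt_get (b t) r)]
  simp only [ContinuousLinearMap.add_apply, ContinuousLinearMap.smul_apply, smul_eq_mul,
    fderiv_get]
  ring
-- section 3: the Jacobian computation
lemma ite_shift {c d : Prop} [Decidable c] [Decidable d] (h : c ↔ d) (x : ℝ) :
    (if c then x else 0) = (if d then x else 0) := by
  by_cases hc : c
  · rw [if_pos hc, if_pos (h.mp hc)]
  · rw [if_neg hc, if_neg (fun hd => hc (h.mpr hd))]

lemma fderiv_get_phi (n m : ℕ) (r : Fin n → ℝ) {s j : ℕ}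
    (hs : 1 ≤ s) (hsn : s ≤ n) (hj : 1 ≤ j) (hjn : j ≤ n) :
    fderiv ℝ (fun v => get n (phi n m v) s) r (evec n j) = Dphi n m r s j := by
  by_cases h : s ≤ n - m
  · have hfun : (fun v => get n (phi n m v) s)
        = fun v : Fin n → ℝ => get n v s
            + (1/4) * ∑ t ∈ Finset.Icc 1 (s - 1), get n v t * get n v (s - t) :=
      funext fun v => get_phi_low v hs hsn h
    rw [hfun, Dphi, if_pos h]
    rw [fderiv_fun_add (diffAt_get s r) ((diffAt_quad r _ _ _).const_mul _)]
    rw [fderiv_const_mul (diffAt_quad r _ _ _)]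
    simp only [ContinuousLinearMap.add_apply, ContinuousLinearMap.smul_apply, smul_eq_mul]
    rw [fderiv_get, fderiv_quad]
    simp only [get_evec hj hjn, ite_mul, one_mul, zero_mul, mul_ite, mul_one, mul_zero]
    rw [Finset.sum_add_distrib, Finset.sum_ite_eq']
    have h2 : ∑ t ∈ Finset.Icc 1 (s - 1), (if s - t = j then get n r t else 0)
        = ∑ t ∈ Finset.Icc 1 (s - 1), (if t = s - j ∧ j < s then get n r t else 0) := by
      refine Finset.sum_congr rfl fun t ht => ?_
      simp only [Finset.mem_Icc] at ht
      exact ite_shift (by omega) _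
    rw [h2]
    by_cases hc : j < s
    · rw [if_pos (Finset.mem_Icc.mpr ⟨hj, by omega⟩)]
      have h3 : ∑ t ∈ Finset.Icc 1 (s - 1), (if t = s - j ∧ j < s then get n r t else 0)
          = ∑ t ∈ Finset.Icc 1 (s - 1), (if t = s - j then get n r t else 0) :=
        Finset.sum_congr rfl fun t ht => ite_shift (by omega) _
      rw [h3, Finset.sum_ite_eq', if_pos (Finset.mem_Icc.mpr ⟨by omega, by omega⟩)]
      rw [if_neg (show ¬ s = j by omega), if_neg (show ¬ j = s by omega)]
      ring
    · rw [if_neg (show j ∉ Finset.Icc 1 (s-1) by rw [Finset.mem_Icc]; omega)]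
      have h3 : ∑ t ∈ Finset.Icc 1 (s - 1), (if t = s - j ∧ j < s then get n r t else 0)
          = 0 := Finset.sum_eq_zero fun t _ => by rw [if_neg (by omega)]
      rw [h3]
      have hz : get n r (s - j) = 0 := by
        rw [show s - j = 0 by omega]; exact get_zero_of_zero r
      rw [hz, ite_shift (show s = j ↔ j = s by omega) (1:ℝ)]
      ring
  · have hfun : (fun v => get n (phi n m v) s)
        = fun v : Fin n → ℝ =>
            -(1/4) * ∑ t ∈ Finset.Icc s n, get n v t * get n v (n - t + s) :=
      funext fun v => get_phi_high v hs hsn h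
    rw [hfun, Dphi, if_neg h]
    rw [fderiv_const_mul (diffAt_quad r _ _ _)]
    simp only [ContinuousLinearMap.smul_apply, smul_eq_mul]
    rw [fderiv_quad]
    simp only [get_evec hj hjn, ite_mul, one_mul, zero_mul, mul_ite, mul_one, mul_zero]
    rw [Finset.sum_add_distrib, Finset.sum_ite_eq']
    have h2 : ∑ t ∈ Finset.Icc s n, (if n - t + s = j then get n r t else 0)
        = ∑ t ∈ Finset.Icc s n, (if t = n + s - j ∧ s ≤ j then get n r t else 0) := by
      refine Finset.sum_congr rfl fun t ht => ?_
      simp only [Finset.mem_Icc] at ht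
      exact ite_shift (by omega) _
    rw [h2]
    by_cases hc : s ≤ j
    · rw [if_pos (Finset.mem_Icc.mpr ⟨hc, hjn⟩)]
      have h3 : ∑ t ∈ Finset.Icc s n, (if t = n + s - j ∧ s ≤ j then get n r t else 0)
          = ∑ t ∈ Finset.Icc s n, (if t = n + s - j then get n r t else 0) :=
        Finset.sum_congr rfl fun t ht => ite_shift (by omega) _
      rw [h3, Finset.sum_ite_eq', if_pos (Finset.mem_Icc.mpr ⟨by omega, by omega⟩)]
      rw [show n + s - j = n - j + s by omega]
      ring
    · rw [if_neg (show j ∉ Finset.Icc s n by rw [Finset.mem_Icc]; omega)]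
      have h3 : ∑ t ∈ Finset.Icc s n, (if t = n + s - j ∧ s ≤ j then get n r t else 0)
          = 0 := Finset.sum_eq_zero fun t _ => by rw [if_neg (by omega)]
      rw [h3, get_zero_of_big r (show n < n - j + s by omega)]
      ring
-- section 4: sum helpers
lemma sum_Lq {n : ℕ} (hn : 1 ≤ n) (q D : ℕ → ℝ) (i : ℕ) :
    ∑ s ∈ Finset.Icc 1 n, Lq q i s * D s
      = -q i * D 1 + (if i + 1 ≤ n then D (i + 1) else 0) := by
  have h1 : ∀ s ∈ Finset.Icc 1 n, Lq q i s * D s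
      = (if s = 1 then -q i * D s else 0) + (if s = i + 1 then D s else 0) := by
    intro s _
    rw [Lq]
    split_ifs <;> ring
  rw [Finset.sum_congr rfl h1, Finset.sum_add_distrib, Finset.sum_ite_eq',
    Finset.sum_ite_eq', if_pos (Finset.mem_Icc.mpr ⟨le_rfl, hn⟩)]
  congr 1
  exact ite_shift (by rw [Finset.mem_Icc]; omega) _

lemma quad_restrict_low {n : ℕ} (r : Fin n → ℝ) {i : ℕ} (hin : i ≤ n + 1) :
    ∑ s ∈ Finset.Icc 1 n, get n r (i - s) * get n r s
      = ∑ t ∈ Finset.Icc 1 (i - 1), get n r t * get n r (i - t) := by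
  rw [← Finset.sum_subset (Finset.Icc_subset_Icc le_rfl (by omega : i - 1 ≤ n))
    (fun s hs hs' => ?_)]
  · exact Finset.sum_congr rfl fun t _ => mul_comm _ _
  · simp only [Finset.mem_Icc] at hs hs'
    have : i - s = 0 := by omega
    rw [this, get_zero_of_zero, zero_mul]

lemma quad_restrict_high {n : ℕ} (r : Fin n → ℝ) {i : ℕ} (hi : 1 ≤ i) :
    ∑ s ∈ Finset.Icc 1 n, get n r (n - s + i) * get n r s
      = ∑ t ∈ Finset.Icc i n, get n r t * get n r (n - t + i) := by
  rw [← Finset.sum_subset (Finset.Icc_subset_Icc hi le_rfl) (fun s hs hs' => ?_)]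
  · exact Finset.sum_congr rfl fun t _ => mul_comm _ _
  · simp only [Finset.mem_Icc] at hs hs'
    rw [get_zero_of_big r (by omega), zero_mul]

lemma sum_S_low {n m : ℕ} (r : Fin n → ℝ) {i : ℕ} (hi : 1 ≤ i) (hin : i ≤ n)
    (h : i ≤ n - m) :
    ∑ s ∈ Finset.Icc 1 n, Dphi n m r i s * get n r s
      = get n r i + (1/2) * ∑ t ∈ Finset.Icc 1 (i - 1), get n r t * get n r (i - t) := by
  have h1 : ∀ s ∈ Finset.Icc 1 n, Dphi n m r i s * get n r s
      = (if s = i then get n r s else 0) + (1/2) * (get n r (i - s) * get n r s) := by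
    intro s _
    rw [Dphi, if_pos h]
    split_ifs <;> ring
  rw [Finset.sum_congr rfl h1, Finset.sum_add_distrib, Finset.sum_ite_eq',
    if_pos (Finset.mem_Icc.mpr ⟨hi, hin⟩), ← Finset.mul_sum, quad_restrict_low r (by omega)]

lemma sum_S_high {n m : ℕ} (r : Fin n → ℝ) {i : ℕ} (hi : 1 ≤ i) (hin : i ≤ n)
    (h : ¬ i ≤ n - m) :
    ∑ s ∈ Finset.Icc 1 n, Dphi n m r i s * get n r s
      = -(1/2) * ∑ t ∈ Finset.Icc i n, get n r t * get n r (n - t + i) := by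
  have h1 : ∀ s ∈ Finset.Icc 1 n, Dphi n m r i s * get n r s
      = -(1/2) * (get n r (n - s + i) * get n r s) := by
    intro s _
    rw [Dphi, if_neg h]; ring
  rw [Finset.sum_congr rfl h1, ← Finset.mul_sum, quad_restrict_high r hi]
-- section 5: getZ and special Dphi values
lemma getZ_eq_get {n : ℕ} (r : Fin n → ℝ) {z : ℤ} (h1 : 1 ≤ z) (h2 : z ≤ (n : ℤ)) :
    getZ n r z = get n r z.toNat := by
  rw [getZ, dif_pos ⟨h1, h2⟩, _root_.get, dif_pos ⟨by omega, by omega⟩]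

lemma Rj_eq {n m : ℕ} (hmn : m < n) (r : Fin n → ℝ) {j : ℕ} (hj : 1 ≤ j) (hjn : j ≤ n) :
    getZ n r ((n : ℤ) - j - m + 1 + n * (((j : ℤ) + m - 1) / n))
      = if j ≤ n - m then get n r (n - m + 1 - j) else get n r (2*n - m + 1 - j) := by
  by_cases hc : j ≤ n - m
  · have hdiv : ((j : ℤ) + m - 1) / n = 0 :=
      Int.ediv_eq_zero_of_lt (by omega) (by omega)
    rw [hdiv, mul_zero, add_zero, if_pos hc,
      getZ_eq_get r (by omega) (by omega)]
    congr 1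
    omega
  · have h1 : ((j : ℤ) + m - 1) = ((j : ℤ) + m - 1 - n) + 1 * n := by ring
    have hdiv : ((j : ℤ) + m - 1) / n = 1 := by
      rw [h1, Int.add_mul_ediv_right _ _ (by omega : (n:ℤ) ≠ 0),
        Int.ediv_eq_zero_of_lt (by omega) (by omega)]
      omega
    rw [hdiv, mul_one, if_neg hc, getZ_eq_get r (by omega) (by omega)]
    congr 1
    omega

lemma Dphi_one {n m : ℕ} (hmn : m < n) (r : Fin n → ℝ) {j : ℕ} (hj : 1 ≤ j) :
    Dphi n m r 1 j = if j = 1 then 1 else 0 := by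
  rw [Dphi, if_pos (by omega), show 1 - j = 0 by omega, get_zero_of_zero]
  ring

lemma Dphi_nm {n m : ℕ} (hmn : m < n) (r : Fin n → ℝ) {i : ℕ} (hi : 1 ≤ i) (hin : i ≤ n) :
    Dphi n m r i (n - m) = if i = n - m then 1 else 0 := by
  rw [Dphi]
  by_cases h : i ≤ n - m
  · rw [if_pos h, show i - (n - m) = 0 by omega, get_zero_of_zero,
      ite_shift (show n - m = i ↔ i = n - m by omega) (1:ℝ)]
    ring
  · rw [if_neg h, get_zero_of_big r (by omega), if_neg (by omega)]
    ring
-- section 6: RHS sum reductions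
lemma RHS_lt {n m : ℕ} (hmn : m < n) (r : Fin n → ℝ) {i j : ℕ}
    (hi1 : 1 ≤ i) (hin : i ≤ n) (hj1 : 1 ≤ j) (hjn : j ≤ n) :
    ∑ s ∈ Finset.Icc 1 n, Dphi n m r i s * LamMat n m r s j
      = (if 2 ≤ j ∧ ¬(j - 1 = n - m) then Dphi n m r i (j - 1) else 0)
        - (if j = 1 then 1 else 0) *
            ((1/2) * ∑ s ∈ Finset.Icc 1 n, Dphi n m r i s * get n r s)
        - (1/2) * (if j ≤ n - m then get n r (n - m + 1 - j)
              else get n r (2*n - m + 1 - j)) * (if i = n - m then 1 else 0) := by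
  set R : ℝ := if j ≤ n - m then get n r (n - m + 1 - j) else get n r (2*n - m + 1 - j)
    with hR
  have hsummand : ∀ s ∈ Finset.Icc 1 n, Dphi n m r i s * LamMat n m r s j
      = (if s = j - 1 ∧ (2 ≤ j ∧ ¬(j - 1 = n - m)) then Dphi n m r i s else 0)
        - (if j = 1 then 1 else 0) * ((1/2) * (Dphi n m r i s * get n r s))
        - (if s = n - m then (1/2) * R * Dphi n m r i s else 0) := by
    intro s hs
    simp only [Finset.mem_Icc] at hs
    rw [LamMat, if_pos hmn, Rj_eq hmn r hj1 hjn, ← hR]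
    split_ifs <;> (first | ring1 | (exfalso; omega))
  rw [Finset.sum_congr rfl hsummand, Finset.sum_sub_distrib, Finset.sum_sub_distrib]
  congr 1
  · congr 1
    · by_cases hP : 2 ≤ j ∧ ¬(j - 1 = n - m)
      · have : ∀ s ∈ Finset.Icc 1 n,
            (if s = j - 1 ∧ (2 ≤ j ∧ ¬(j - 1 = n - m)) then Dphi n m r i s else 0)
              = (if s = j - 1 then Dphi n m r i s else 0) :=
          fun s _ => ite_shift (by tauto) _
        rw [Finset.sum_congr rfl this, Finset.sum_ite_eq',
          if_pos (Finset.mem_Icc.mpr ⟨by omega, by omega⟩), if_pos hP]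
      · rw [if_neg hP, Finset.sum_eq_zero fun s _ => if_neg (by tauto)]
    · rw [← Finset.mul_sum, ← Finset.mul_sum]
  · rw [Finset.sum_ite_eq', if_pos (Finset.mem_Icc.mpr ⟨by omega, by omega⟩),
      Dphi_nm hmn r hi1 hin]

lemma RHS_eq {n : ℕ} (hn : 1 ≤ n) (r : Fin n → ℝ) {i j : ℕ}
    (hj1 : 1 ≤ j) (hjn : j ≤ n) :
    ∑ s ∈ Finset.Icc 1 n, Dphi n n r i s * LamMat n n r s j
      = (if 2 ≤ j then Dphi n n r i (j - 1) else 0)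
        + (1/4) * get n r (n - j + 1) *
            ∑ s ∈ Finset.Icc 1 n, Dphi n n r i s * get n r s := by
  have hsummand : ∀ s ∈ Finset.Icc 1 n, Dphi n n r i s * LamMat n n r s j
      = (if s = j - 1 ∧ 2 ≤ j then Dphi n n r i s else 0)
        + (1/4) * get n r (n - j + 1) * (Dphi n n r i s * get n r s) := by
    intro s hs
    simp only [Finset.mem_Icc] at hs
    rw [LamMat, if_neg (lt_irrefl n)]
    split_ifs <;> (first | ring1 | (exfalso; omega))
  rw [Finset.sum_congr rfl hsummand, Finset.sum_add_distrib]
  congr 1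
  · by_cases hP : 2 ≤ j
    · have : ∀ s ∈ Finset.Icc 1 n,
          (if s = j - 1 ∧ 2 ≤ j then Dphi n n r i s else 0)
            = (if s = j - 1 then Dphi n n r i s else 0) :=
        fun s _ => ite_shift (by tauto) _
      rw [Finset.sum_congr rfl this, Finset.sum_ite_eq',
        if_pos (Finset.mem_Icc.mpr ⟨by omega, by omega⟩), if_pos hP]
    · rw [if_neg hP, Finset.sum_eq_zero fun s _ => if_neg (by tauto)]
  · rw [← Finset.mul_sum]

/-- the special conformal Killing tensor `L` takes the form `Λ` in the
flat coordinates `r`: `ℒ(φ(r)) · Dφ(r) = Dφ(r) · Λ(r)` entrywise, where `Dφ(r)` is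
the Jacobian matrix of `φ`. -/
theorem Killing_tensor_in_flat_coordinates
    (n : ℕ) (hn : 2 ≤ n) (m : ℕ) (hm : m ≤ n)
    (r : Fin n → ℝ)
    (i j : ℕ) (hi : i ∈ Finset.Icc 1 n) (hj : j ∈ Finset.Icc 1 n) :
    ∑ s ∈ Finset.Icc 1 n,
        Lq (fun t => get n (phi n m r) t) i s *
          fderiv ℝ (fun v => get n (phi n m v) s) r (evec n j) =
      ∑ s ∈ Finset.Icc 1 n,
        fderiv ℝ (fun v => get n (phi n m v) i) r (evec n s) * LamMat n m r s j := by
  simp only [Finset.mem_Icc] at hi hj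
  obtain ⟨hi1, hin⟩ := hi
  obtain ⟨hj1, hjn⟩ := hj
  have hq : ∀ s ∈ Finset.Icc 1 n, Lq (fun t => get n (phi n m r) t) i s *
      fderiv ℝ (fun v => get n (phi n m v) s) r (evec n j)
      = Lq (fun t => get n (phi n m r) t) i s * Dphi n m r s j := by
    intro s hs
    simp only [Finset.mem_Icc] at hs
    rw [fderiv_get_phi n m r hs.1 hs.2 hj1 hjn]
  have hq2 : ∀ s ∈ Finset.Icc 1 n,
      fderiv ℝ (fun v => get n (phi n m v) i) r (evec n s) * LamMat n m r s j
      = Dphi n m r i s * LamMat n m r s j := by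
    intro s hs
    simp only [Finset.mem_Icc] at hs
    rw [fderiv_get_phi n m r hi1 hin hs.1 hs.2]
  rw [Finset.sum_congr rfl hq, Finset.sum_congr rfl hq2,
    sum_Lq (by omega) (fun t => get n (phi n m r) t) (fun s => Dphi n m r s j) i]
  beta_reduce
  by_cases hmn : m < n
  · -- case m < n
    rw [RHS_lt hmn r hi1 hin hj1 hjn, Dphi_one hmn r hj1]
    by_cases hj1' : j = 1
    · subst hj1'
      rw [if_pos rfl, if_neg (by omega : ¬(2 ≤ 1 ∧ ¬(1 - 1 = n - m))),
        if_pos (by omega : 1 ≤ n - m), show n - m + 1 - 1 = n - m by omega]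
      by_cases hil : i ≤ n - m
      · rw [get_phi_low r hi1 hin hil, sum_S_low r hi1 hin hil]
        by_cases hie : i = n - m
        · rw [if_pos hie]
          by_cases him : i + 1 ≤ n
          · have e1 : n - 1 + (i + 1) = n + i := by omega
            have e2 : get n r (n + i) = 0 := get_zero_of_big r (by omega)
            rw [if_pos him, Dphi, if_neg (show ¬ i + 1 ≤ n - m by omega), e1, e2, ← hie]
            ring
          · rw [if_neg him, ← hie]
            ring
        · have him : i + 1 ≤ n := by omega
          rw [if_neg hie, if_pos him, Dphi, if_pos (by omega : i + 1 ≤ n - m),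
            if_neg (by omega : ¬ 1 = i + 1), show i + 1 - 1 = i by omega]
          ring
      · rw [get_phi_high r hi1 hin hil, sum_S_high r hi1 hin hil,
          if_neg (by omega : ¬ i = n - m)]
        by_cases him : i + 1 ≤ n
        · rw [if_pos him, Dphi, if_neg (by omega : ¬ i + 1 ≤ n - m),
            show n - 1 + (i + 1) = n + i by omega, get_zero_of_big r (by omega)]
          ring
        · rw [if_neg him]
          ring
    · -- j ≥ 2
      have hj2 : 2 ≤ j := by omega
      rw [if_neg hj1']
      by_cases hie : i = n - m
      · rw [if_pos hie]
        by_cases hjl : j ≤ n - m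
        · -- j ≤ n - m, so j - 1 ≠ n - m
          rw [if_pos hjl, if_pos (show 2 ≤ j ∧ ¬(j - 1 = n - m) by omega)]
          by_cases him : i + 1 ≤ n
          · rw [if_pos him, Dphi, if_neg (by omega : ¬ i + 1 ≤ n - m),
              get_zero_of_big r (by omega : n < n - j + (i + 1)),
              Dphi, if_pos (show i ≤ n - m by omega),
              if_neg (show ¬ j - 1 = i by omega),
              show i - (j - 1) = n - m + 1 - j by omega]
            ring
          · rw [if_neg him, Dphi, if_pos (show i ≤ n - m by omega),
              if_neg (show ¬ j - 1 = i by omega),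
              show i - (j - 1) = n - m + 1 - j by omega]
            ring
        · -- j > n - m, hence m ≥ 1 and i + 1 ≤ n
          have hm1 : 1 ≤ m := by omega
          have him : i + 1 ≤ n := by omega
          rw [if_neg hjl, if_pos him, Dphi, if_neg (by omega : ¬ i + 1 ≤ n - m),
            show n - j + (i + 1) = 2*n - m + 1 - j by omega]
          by_cases hje : j - 1 = n - m
          · rw [if_neg (show ¬(2 ≤ j ∧ ¬(j - 1 = n - m)) by omega)]
            ring
          · rw [if_pos (show 2 ≤ j ∧ ¬(j - 1 = n - m) by omega),
              Dphi, if_pos (show i ≤ n - m by omega),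
              if_neg (show ¬ j - 1 = i by omega),
              show i - (j - 1) = 0 by omega, get_zero_of_zero]
            ring
      · rw [if_neg hie]
        by_cases hil : i ≤ n - m
        · -- i < n - m
          have him : i + 1 ≤ n := by omega
          rw [if_pos him, Dphi, if_pos (show i + 1 ≤ n - m by omega)]
          by_cases hje : j - 1 = n - m
          · rw [if_neg (show ¬(2 ≤ j ∧ ¬(j - 1 = n - m)) by omega),
              if_neg (show ¬ j = i + 1 by omega),
              show i + 1 - j = 0 by omega, get_zero_of_zero]
            ring
          · rw [if_pos (show 2 ≤ j ∧ ¬(j - 1 = n - m) by omega),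
              Dphi, if_pos hil,
              ite_shift (show j = i + 1 ↔ j - 1 = i by omega) (1:ℝ),
              show i + 1 - j = i - (j - 1) by omega]
            ring
        · -- i > n - m
          by_cases him : i + 1 ≤ n
          · rw [if_pos him, Dphi, if_neg (show ¬ i + 1 ≤ n - m by omega)]
            by_cases hje : j - 1 = n - m
            · rw [if_neg (show ¬(2 ≤ j ∧ ¬(j - 1 = n - m)) by omega),
                get_zero_of_big r (show n < n - j + (i + 1) by omega)]
              ring
            · rw [if_pos (show 2 ≤ j ∧ ¬(j - 1 = n - m) by omega),
                Dphi, if_neg hil,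
                show n - j + (i + 1) = n - (j - 1) + i by omega]
              ring
          · rw [if_neg him]
            by_cases hje : j - 1 = n - m
            · rw [if_neg (show ¬(2 ≤ j ∧ ¬(j - 1 = n - m)) by omega)]
              ring
            · rw [if_pos (show 2 ≤ j ∧ ¬(j - 1 = n - m) by omega),
                Dphi, if_neg hil,
                get_zero_of_big r (show n < n - (j - 1) + i by omega)]
              ring
  · -- case m = n
    have hme : m = n := by omega
    rw [hme, RHS_eq (by omega) r hj1 hjn]
    have h0 : ¬ i ≤ n - n := by omega
    have h01 : ¬ (1:ℕ) ≤ n - n := by omega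
    rw [sum_S_high r hi1 hin h0, get_phi_high r hi1 hin h0,
      Dphi, if_neg h01]
    by_cases him : i + 1 ≤ n
    · rw [if_pos him, Dphi, if_neg (show ¬ i + 1 ≤ n - n by omega)]
      by_cases hj2 : 2 ≤ j
      · have e1 : n - j + (i + 1) = n - (j - 1) + i := by omega
        rw [if_pos hj2, Dphi, if_neg h0, e1]
        ring
      · have e1 : n - j + (i + 1) = n + i := by omega
        have e2 : get n r (n + i) = 0 := get_zero_of_big r (by omega)
        rw [if_neg hj2, e1, e2]
        ring
    · rw [if_neg him]
      by_cases hj2 : 2 ≤ j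
      · rw [if_pos hj2, Dphi, if_neg h0,
          get_zero_of_big r (show n < n - (j - 1) + i by omega)]
        ring
      · rw [if_neg hj2]
        ring
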